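/- If H ∈ K°_n and F is a facet of I^n with H ∩ F ≠ ∅, then there exist H_F ∈ K°_{n−1}(F) and a face f_F of F such that H ∩ F = H_F ∩ f_F. -/

import Mathlib

open Set Function

noncomputable section

abbrev E (n : ℕ) := EuclideanSpace ℝ (Fin n)

/-- `I^d × {0}^{n-d}` inside `ℝ^n`. -/
def IcubeD (n d : ℕ) : Set (E n) :=
  {x | (∀ i : Fin n, (i : ℕ) < d → x i ∈ Icc (-1 : ℝ) 1) ∧
       ∀ i : Fin n, d ≤ (i : ℕ) → x i = 0}

/-- The cube `I^n = [-1,1]^n`. -/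
def Icube (n : ℕ) : Set (E n) := IcubeD n n

/-- `H^d_{ij}(a,b) = {x ∈ I^d × {0}^{n-d} : a·x_i ≥ b·x_j}`. -/
def HsetD (n d : ℕ) (i j : Fin n) (a b : ℝ) : Set (E n) :=
  {x ∈ IcubeD n d | b * x j ≤ a * x i}

def Hset (n : ℕ) (i j : Fin n) (a b : ℝ) : Set (E n) := HsetD n n i j a b

/-- The family `ℋ^d` of the sets `H^d_{ij}(a,b)`, `a, b ∈ {-1,1}`. -/
def HfamD (n d : ℕ) : Set (Set (E n)) :=
  {H | ∃ i j : Fin n, (i : ℕ) < d ∧ (j : ℕ) < d ∧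
      ∃ a b : ℝ, (a = 1 ∨ a = -1) ∧ (b = 1 ∨ b = -1) ∧ H = HsetD n d i j a b}

def Hfam (n : ℕ) : Set (Set (E n)) := HfamD n n

/-- Fundamental subsets of `ℋ^d`. -/
def IsFundSubsetD (n d : ℕ) (S : Set (Set (E n))) : Prop :=
  S ⊆ HfamD n d ∧
  ∀ i j : Fin n, (i : ℕ) < d → (j : ℕ) < d → i ≤ j →
    (HsetD n d i j 1 (-1) ∈ S ∨ HsetD n d i j (-1) 1 ∈ S) ∧
    (HsetD n d i j 1 1 ∈ S ∨ HsetD n d i j (-1) (-1) ∈ S)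

def IsFundSubset (n : ℕ) (S : Set (Set (E n))) : Prop := IsFundSubsetD n n S

/-- `K°_d` (realized inside `ℝ^n` on the slice `I^d × {0}^{n-d}`). -/
def KoD (n d : ℕ) : Set (Set (E n)) :=
  {K | ∃ S, IsFundSubsetD n d S ∧ K = ⋂₀ S}

/-- `K°_n`. -/
def Ko (n : ℕ) : Set (Set (E n)) := KoD n n

/-- Symmetries of the cube `I^n`. -/
def SymI (n : ℕ) (γ : E n → E n) : Prop :=
  Isometry γ ∧ Surjective γ ∧ γ '' Icube n = Icube n

/-- Conformal affine maps `x ↦ λ U x + v`, `λ > 0`, `U ∈ O(n)`. -/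
def ConfAffine (n : ℕ) (L : E n → E n) : Prop :=
  ∃ (c : ℝ) (U : E n ≃ₗᵢ[ℝ] E n) (v : E n), 0 < c ∧ ∀ x, L x = c • U x + v

/-- `d`-dimensional cubes in `ℝ^n` (for `d ≥ 1`). -/
def IsCube (n d : ℕ) (C : Set (E n)) : Prop :=
  ∃ L : E n → E n, ConfAffine n L ∧ L '' C = IcubeD n d

/-- `K°_d(C)` for a `d`-dimensional cube `C` (with `K°_0(C) = {C}`). -/
def KoCube (n d : ℕ) (C : Set (E n)) : Set (Set (E n)) :=
  {K | (d = 0 ∧ K = C) ∨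
       (1 ≤ d ∧ ∃ L : E n → E n, ConfAffine n L ∧ L '' C = IcubeD n d ∧
          ∃ H ∈ KoD n d, K = L ⁻¹' H)}

/-- Faces of `I^d × {0}^{n-d}` of dimension `e`. -/
def IsFaceD (n d : ℕ) (f : Set (E n)) (e : ℕ) : Prop :=
  ∃ J : Fin n → Set ℝ,
    (∀ i : Fin n, (i : ℕ) < d → (J i = Icc (-1 : ℝ) 1 ∨ J i = {-1} ∨ J i = {1})) ∧
    (∀ i : Fin n, d ≤ (i : ℕ) → J i = {0}) ∧
    {i : Fin n | J i = Icc (-1 : ℝ) 1}.ncard = e ∧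
    f = {x : E n | ∀ i, x i ∈ J i}

/-- `c` is a face of dimension `e` of the `d`-dimensional cube `C`. -/
def FaceOfCubeDim (n d : ℕ) (C c : Set (E n)) (e : ℕ) : Prop :=
  ∃ L : E n → E n, ConfAffine n L ∧ L '' C = IcubeD n d ∧
    ∃ f, IsFaceD n d f e ∧ c = L ⁻¹' f

/-- The symmetric decomposition `K_d(C)` of a `d`-dimensional cube `C`. -/
def KcalCube (n d : ℕ) (C : Set (E n)) : Set (Set (E n)) :=
  {K | ∃ c e, FaceOfCubeDim n d C c e ∧ K ∈ KoCube n e c}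

/-- `∂K_d(C)`: union of the `K°` of the proper faces of `C`. -/
def KcalBdCube (n d : ℕ) (C : Set (E n)) : Set (Set (E n)) :=
  {K | ∃ c e, FaceOfCubeDim n d C c e ∧ e < d ∧ K ∈ KoCube n e c}

/-- The symmetric decomposition `K_n` of `I^n`. -/
def Kcal (n : ℕ) : Set (Set (E n)) :=
  {K | ∃ c e, IsFaceD n n c e ∧ K ∈ KoCube n e c}

/-- `∂K_n`: union of the `K°` of the proper faces of `I^n`. -/
def KcalBdI (n : ℕ) : Set (Set (E n)) :=
  {K | ∃ c e, IsFaceD n n c e ∧ e < n ∧ K ∈ KoCube n e c}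

/-- `∂_∘ C`: the union of the proper faces of the `d`-cube `C`. -/
def cellBd (n d : ℕ) (C : Set (E n)) : Set (E n) :=
  ⋃₀ {c | ∃ e, e < d ∧ FaceOfCubeDim n d C c e}

/-- The cone `Cone(x, Y) = {x + t (y - x) : y ∈ Y, t ∈ [0,1]}`. -/
def Cone (n : ℕ) (x : E n) (Y : Set (E n)) : Set (E n) :=
  {z | ∃ y ∈ Y, ∃ t : ℝ, t ∈ Icc (0 : ℝ) 1 ∧ z = x + t • (y - x)}

/-- Standard orthotopes `∏ [-a_i, a_i]`. -/
def StdOrtho (n : ℕ) (a : Fin n → ℝ) : Set (E n) :=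
  {x | ∀ i, x i ∈ Icc (-(a i)) (a i)}

/-- `n`-dimensional orthotopes in `ℝ^n`. -/
def IsOrtho (n : ℕ) (R : Set (E n)) : Prop :=
  ∃ (L : E n → E n) (a : Fin n → ℝ), Isometry L ∧ Surjective L ∧
    (∀ i, 0 < a i) ∧ L '' R = StdOrtho n a

/-- The cubic-stretching of the standard orthotope `∏ [-a_i, a_i]`. -/
def stretch (n : ℕ) (a : Fin n → ℝ) : E n → E n :=
  fun x => WithLp.toLp 2 (fun i => x i / a i)

/-- `K_n(R)` for an `n`-dimensional orthotope `R`. -/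
def KcalOrtho (n : ℕ) (R : Set (E n)) : Set (Set (E n)) :=
  {K | ∃ (L : E n → E n) (a : Fin n → ℝ), Isometry L ∧ Surjective L ∧
      (∀ i, 0 < a i) ∧ L '' R = StdOrtho n a ∧
      ∃ H ∈ Kcal n, K = L ⁻¹' (stretch n a ⁻¹' H)}

/-- Faces of an `n`-dimensional orthotope `R`. -/
def FaceOfOrtho (n : ℕ) (R c : Set (E n)) : Prop :=
  ∃ (L : E n → E n) (a : Fin n → ℝ), Isometry L ∧ Surjective L ∧
    (∀ i, 0 < a i) ∧ L '' R = StdOrtho n a ∧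
    ∃ f e, IsFaceD n n f e ∧ c = L ⁻¹' (stretch n a ⁻¹' f)

/-- The center `x_α` of the subcube `C_α`. -/
def xalpha (n l : ℕ) (α : Fin n → ℕ) : E n :=
  WithLp.toLp 2 (fun i => (2 * (α i : ℝ) + 1 - (l : ℝ)) / (l : ℝ))

/-- `T_α(x) = l (x - x_α)`, mapping `C_α` onto `I^n`. -/
def Talpha (n l : ℕ) (α : Fin n → ℕ) : E n → E n :=
  fun x => (l : ℝ) • (x - xalpha n l α)

/-- The refined symmetric decomposition `K_{n,l}`. -/
def Knl (n l : ℕ) : Set (Set (E n)) :=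
  {K | ∃ α : Fin n → ℕ, (∀ i, α i < l) ∧ ∃ H ∈ Kcal n, K = Talpha n l α ⁻¹' H}

/-- `Γ` is a group of surjective isometries of `ℝ^n`. -/
def IsIsomGroup (n : ℕ) (Γ : Set (E n → E n)) : Prop :=
  (∀ γ ∈ Γ, Isometry γ ∧ Surjective γ) ∧ id ∈ Γ ∧
  (∀ γ ∈ Γ, ∀ γ' ∈ Γ, γ ∘ γ' ∈ Γ) ∧
  ∀ γ ∈ Γ, ∃ γ' ∈ Γ, γ ∘ γ' = id ∧ γ' ∘ γ = id

/-- `D` is a fundamental domain of `Γ`. -/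
def IsFundDom (n : ℕ) (Γ : Set (E n → E n)) (D : Set (E n)) : Prop :=
  (∃ U : Set (E n), U.Nonempty ∧ IsOpen U ∧ IsConnected U ∧ D = closure U) ∧
  (⋃ γ ∈ Γ, γ '' D) = univ ∧
  (∀ x : E n, ∃ V : Set (E n), x ∈ V ∧ IsOpen V ∧
    {γ ∈ Γ | ((γ '' D) ∩ V).Nonempty}.Finite) ∧
  ∀ γ ∈ Γ, γ ≠ id → interior D ∩ interior (γ '' D) = ∅

/-!
On the facet `F = {x ∈ I^n | x_k = ε}` each constraint `b x_j ≤ a x_i` of `H` either avoids `k`,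
or, once `x_k = ε` is substituted, reads `s x_j ≤ ±1` for a single coordinate `j ≠ k`: then it is
void or it forces `x_j = -s`, so these constraints cut out the smallest face of `F` containing `H ∩ F`
(the constraint `b x_k ≤ a x_k` holds since `H ∩ F ≠ ∅`). After the change of coordinates
swapping `k` with the last coordinate and translating `F` onto `I^{n-1} × {0}`, the constraints
avoiding `k` form a fundamental subset of `ℋ^{n-1}`.
-/

section Cube

variable {n d : ℕ}

lemma mem_Icc_of_mem_IcubeD {x : E n} (hx : x ∈ IcubeD n d) (i : Fin n) :
    x i ∈ Icc (-1 : ℝ) 1 := by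
  by_cases hi : (i : ℕ) < d
  · exact hx.1 i hi
  · rw [hx.2 i (not_lt.mp hi)]
    norm_num

lemma mem_Icube_iff {x : E n} : x ∈ Icube n ↔ ∀ i, x i ∈ Icc (-1 : ℝ) 1 :=
  ⟨mem_Icc_of_mem_IcubeD, fun h => ⟨fun i _ => h i, fun i hi => absurd i.isLt (not_lt.mpr hi)⟩⟩

lemma HsetD_comm (i j : Fin n) (a b : ℝ) : HsetD n d i j a b = HsetD n d j i (-b) (-a) := by
  ext x
  simp only [HsetD, mem_ofPred_eq]
  constructor <;> rintro ⟨hx, h⟩ <;> exact ⟨hx, by linarith⟩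

lemma IsFundSubsetD.covers {S : Set (Set (E n))} (hS : IsFundSubsetD n d S) {i j : Fin n}
    (hi : (i : ℕ) < d) (hj : (j : ℕ) < d) :
    (HsetD n d i j 1 (-1) ∈ S ∨ HsetD n d i j (-1) 1 ∈ S) ∧
      (HsetD n d i j 1 1 ∈ S ∨ HsetD n d i j (-1) (-1) ∈ S) := by
  rcases le_total i j with hij | hji
  · exact hS.2 i j hi hj hij
  · obtain ⟨h₁, h₂⟩ := hS.2 j i hj hi hji
    simp only [HsetD_comm i j, neg_neg]
    exact ⟨h₁, h₂.symm⟩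

lemma eq_univ_of_mem_KoD_zero {K : Set (E n)} (hK : K ∈ KoD n 0) : K = univ := by
  obtain ⟨S, hS, rfl⟩ := hK
  refine sInter_eq_univ.mpr fun T hT => ?_
  obtain ⟨i, -, hi, -⟩ := hS.1 hT
  exact absurd hi (Nat.not_lt_zero _)

def reindexFund (S : Set (Set (E n))) (σ : Fin n → Fin n) (d : ℕ) : Set (Set (E n)) :=
  {T | ∃ i j : Fin n, (i : ℕ) < d ∧ (j : ℕ) < d ∧ ∃ a b : ℝ, (a = 1 ∨ a = -1) ∧
    (b = 1 ∨ b = -1) ∧ HsetD n n (σ i) (σ j) a b ∈ S ∧ T = HsetD n d i j a b}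

lemma isFundSubsetD_reindexFund {S : Set (Set (E n))} (hS : IsFundSubset n S)
    (σ : Fin n → Fin n) (d : ℕ) : IsFundSubsetD n d (reindexFund S σ d) := by
  refine ⟨fun T ⟨i, j, hi, hj, a, b, ha, hb, _, hT⟩ => ⟨i, j, hi, hj, a, b, ha, hb, hT⟩,
    fun i j hi hj _ => ?_⟩
  obtain ⟨h₁, h₂⟩ := IsFundSubsetD.covers hS (σ i).isLt (σ j).isLt
  constructor
  · rcases h₁ with h | h
    · exact Or.inl ⟨i, j, hi, hj, 1, -1, by norm_num, by norm_num, h, rfl⟩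
    · exact Or.inr ⟨i, j, hi, hj, -1, 1, by norm_num, by norm_num, h, rfl⟩
  · rcases h₂ with h | h
    · exact Or.inl ⟨i, j, hi, hj, 1, 1, by norm_num, by norm_num, h, rfl⟩
    · exact Or.inr ⟨i, j, hi, hj, -1, -1, by norm_num, by norm_num, h, rfl⟩

end Cube

section MinFace

variable {n d : ℕ}

def FixedAt (G : Set (E n)) (i : Fin n) (c : ℝ) : Prop := (c = 1 ∨ c = -1) ∧ ∀ z ∈ G, z i = c

/-- The smallest face of `I^d × {0}^{n-d}` containing `G`, for nonempty `G ⊆ I^d × {0}^{n-d}`. -/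
def minFace (n d : ℕ) (G : Set (E n)) : Set (E n) :=
  {y | y ∈ IcubeD n d ∧ ∀ j c, FixedAt G j c → y j = c}

lemma minFace_subset_IcubeD (G : Set (E n)) : minFace n d G ⊆ IcubeD n d := fun _ hy => hy.1

lemma subset_minFace {G : Set (E n)} (hG : G ⊆ IcubeD n d) : G ⊆ minFace n d G :=
  fun y hy => ⟨hG hy, fun _ _ h => h.2 y hy⟩

open Classical in
def minFaceCoords (d : ℕ) (G : Set (E n)) (z₀ : E n) (i : Fin n) : Set ℝ :=
  if (i : ℕ) < d then
    if ∃ c, FixedAt G i c then {z₀ i} else Icc (-1) 1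
  else {0}

lemma minFaceCoords_of_fixed {G : Set (E n)} {z₀ : E n} (hz₀ : z₀ ∈ G) {i : Fin n}
    (hi : (i : ℕ) < d) {c : ℝ} (h : FixedAt G i c) : minFaceCoords d G z₀ i = {c} := by
  rw [minFaceCoords, if_pos hi, if_pos ⟨c, h⟩, h.2 z₀ hz₀]

lemma minFaceCoords_of_not_fixed {G : Set (E n)} {z₀ : E n} {i : Fin n} (hi : (i : ℕ) < d)
    (h : ¬∃ c, FixedAt G i c) :
    minFaceCoords d G z₀ i = Icc (-1) 1 := by
  rw [minFaceCoords, if_pos hi, if_neg h]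

lemma minFace_eq {G : Set (E n)} (hG : G ⊆ IcubeD n d) {z₀ : E n} (hz₀ : z₀ ∈ G) :
    minFace n d G = {y | ∀ i, y i ∈ minFaceCoords d G z₀ i} := by
  ext y
  simp only [minFace, IcubeD, mem_ofPred_eq]
  constructor
  · rintro ⟨⟨hIcc, hzero⟩, hfix⟩ i
    by_cases hi : (i : ℕ) < d
    · by_cases hfixed : ∃ c, FixedAt G i c
      · obtain ⟨c, h⟩ := hfixed
        rw [minFaceCoords_of_fixed hz₀ hi h]
        exact hfix i c h
      · rw [minFaceCoords_of_not_fixed hi hfixed]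
        exact hIcc i hi
    · rw [minFaceCoords, if_neg hi]
      exact hzero i (not_lt.mp hi)
  · intro hy
    refine ⟨⟨fun i hi => ?_, fun i hi => by simpa [minFaceCoords, not_lt.mpr hi] using hy i⟩,
      fun j c h => ?_⟩
    · by_cases hfixed : ∃ c, FixedAt G i c
      · obtain ⟨c, h⟩ := hfixed
        have := hy i
        rw [minFaceCoords_of_fixed hz₀ hi h, mem_singleton_iff] at this
        rw [this]
        rcases h.1 with rfl | rfl <;> norm_num
      · exact minFaceCoords_of_not_fixed hi hfixed ▸ hy i
    · have hj : (j : ℕ) < d := by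
        by_contra hj
        have := (hG hz₀).2 j (not_lt.mp hj)
        rw [h.2 z₀ hz₀] at this
        rcases h.1 with rfl | rfl <;> norm_num at this
      simpa [minFaceCoords_of_fixed hz₀ hj h] using hy j

lemma isFaceD_minFace {G : Set (E n)} (hG : G ⊆ IcubeD n d) (hne : G.Nonempty) :
    ∃ e, IsFaceD n d (minFace n d G) e := by
  obtain ⟨z₀, hz₀⟩ := hne
  refine ⟨_, minFaceCoords d G z₀, fun i hi => ?_, fun i hi => if_neg (not_lt.mpr hi), rfl,
    minFace_eq hG hz₀⟩
  by_cases hfixed : ∃ c, FixedAt G i c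
  · obtain ⟨c, h⟩ := hfixed
    rw [minFaceCoords_of_fixed hz₀ hi h]
    rcases h.1 with rfl | rfl <;> simp
  · exact Or.inl (minFaceCoords_of_not_fixed hi hfixed)

/-- For `c = 1` the bound holds on the whole cube; for `c = -1` it forces `z_j = -s` on `G`,
hence `y_j = -s`. -/
lemma minFace_coord_le {G : Set (E n)} (hG : G ⊆ IcubeD n d) {y : E n}
    (hy : y ∈ minFace n d G) {j : Fin n} {s c : ℝ} (hs : s = 1 ∨ s = -1) (hc : c = 1 ∨ c = -1)
    (h : ∀ z ∈ G, s * z j ≤ c) : s * y j ≤ c := by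
  obtain ⟨hy₁, hy₂⟩ := mem_Icc_of_mem_IcubeD hy.1 j
  rcases hc with rfl | rfl
  · rcases hs with rfl | rfl <;> linarith
  · have hyj : y j = -s := by
      refine hy.2 j (-s) ⟨by rcases hs with rfl | rfl <;> norm_num, fun z hz => ?_⟩
      obtain ⟨hz₁, hz₂⟩ := mem_Icc_of_mem_IcubeD (hG hz) j
      have := h z hz
      rcases hs with rfl | rfl <;> linarith
    rw [hyj]
    rcases hs with rfl | rfl <;> norm_num

end MinFace

lemma ConfAffine.surjective {n : ℕ} {L : E n → E n} (hL : ConfAffine n L) : Surjective L := by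
  obtain ⟨c, U, v, hc, hL⟩ := hL
  refine fun y => ⟨U.symm (c⁻¹ • (y - v)), ?_⟩
  rw [hL, LinearIsometryEquiv.apply_symm_apply, smul_smul,
    mul_inv_cancel₀ hc.ne', one_smul, sub_add_cancel]

lemma exists_mem_KoCube_inter_eq {n d : ℕ} {C f K : Set (E n)} {L : E n → E n}
    (hL : ConfAffine n L) (hLC : L '' C = IcubeD n d) (hK : K ∈ KoD n d) (hf : f ⊆ C) :
    ∃ HF ∈ KoCube n d C, HF ∩ f = L ⁻¹' K ∩ f := by
  rcases Nat.eq_zero_or_pos d with rfl | hd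
  · refine ⟨C, Or.inl ⟨rfl, rfl⟩, ?_⟩
    rw [eq_univ_of_mem_KoD_zero hK, preimage_univ, univ_inter, inter_eq_right.mpr hf]
  · exact ⟨L ⁻¹' K, Or.inr ⟨hd, L, hL, hLC, K, hK, rfl⟩, rfl⟩

section Facet

variable {n : ℕ}

def coordFacet (k : Fin n) (ε : ℝ) : Set (E n) := {x | x ∈ Icube n ∧ x k = ε}

lemma exists_eq_coordFacet (hn : 1 ≤ n) {F : Set (E n)} (hF : IsFaceD n n F (n - 1)) :
    ∃ (k : Fin n) (ε : ℝ), (ε = 1 ∨ ε = -1) ∧ F = coordFacet k ε := by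
  obtain ⟨J, hJ, -, hcard, rfl⟩ := hF
  obtain ⟨k, hk⟩ : ∃ k, {i : Fin n | J i = Icc (-1 : ℝ) 1}ᶜ = {k} := by
    refine ncard_eq_one.mp ?_
    have := ncard_add_ncard_compl {i : Fin n | J i = Icc (-1 : ℝ) 1}
    rw [hcard, Nat.card_eq_fintype_card, Fintype.card_fin] at this
    omega
  have hfree (i : Fin n) (hi : i ≠ k) : J i = Icc (-1) 1 := by
    by_contra h
    exact hi (hk ▸ h : i ∈ ({k} : Set (Fin n)))
  obtain ⟨ε, hε, hJk⟩ : ∃ ε : ℝ, (ε = 1 ∨ ε = -1) ∧ J k = {ε} := by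
    rcases hJ k k.isLt with h | h | h
    · exact absurd (hk ▸ mem_singleton k : k ∈ {i | J i = Icc (-1 : ℝ) 1}ᶜ) (not_not.mpr h)
    · exact ⟨-1, Or.inr rfl, h⟩
    · exact ⟨1, Or.inl rfl, h⟩
  refine ⟨k, ε, hε, ?_⟩
  ext x
  simp only [coordFacet, mem_Icube_iff, mem_ofPred_eq]
  constructor
  · intro hx
    have hxk : x k = ε := by simpa [hJk] using hx k
    refine ⟨fun i => ?_, hxk⟩
    by_cases hi : i = k
    · rw [hi, hxk]
      rcases hε with rfl | rfl <;> norm_num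
    · simpa [hfree i hi] using hx i
  · rintro ⟨hx, hxk⟩ i
    by_cases hi : i = k
    · rw [hi, hJk, hxk]
      exact mem_singleton ε
    · rw [hfree i hi]
      exact hx i

variable (k lst : Fin n) (ε : ℝ)

def facetMap (x : E n) : E n :=
  LinearIsometryEquiv.piLpCongrLeft 2 ℝ ℝ (Equiv.swap k lst) x + EuclideanSpace.single lst (-ε)

lemma confAffine_facetMap : ConfAffine n (facetMap k lst ε) :=
  ⟨1, _, _, one_pos, fun x => by rw [one_smul]; rfl⟩

lemma facetMap_apply (x : E n) (i : Fin n) :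
    facetMap k lst ε x i = x (Equiv.swap k lst i) + if i = lst then -ε else 0 := by
  simp [facetMap, PiLp.single_apply, Equiv.piCongrLeft', Equiv.symm_swap]

variable {k lst ε}

lemma facetMap_apply_of_ne (x : E n) {i : Fin n} (hi : i ≠ lst) :
    facetMap k lst ε x i = x (Equiv.swap k lst i) := by
  rw [facetMap_apply, if_neg hi, add_zero]

lemma facetMap_apply_last (x : E n) : facetMap k lst ε x lst = x k - ε := by
  rw [facetMap_apply, if_pos rfl, Equiv.swap_apply_right, sub_eq_add_neg]

lemma val_lt_iff_ne_of_val_eq (hlst : (lst : ℕ) = n - 1) {i : Fin n} :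
    (i : ℕ) < n - 1 ↔ i ≠ lst := by
  rw [ne_eq, Fin.ext_iff, hlst]
  omega

lemma swap_apply_ne_right_iff {i : Fin n} : Equiv.swap k lst i ≠ lst ↔ i ≠ k := by
  rw [ne_eq, Equiv.swap_apply_eq_iff, Equiv.swap_apply_right]

lemma facetMap_apply_swap (x : E n) {i : Fin n} (hi : i ≠ k) :
    facetMap k lst ε x (Equiv.swap k lst i) = x i := by
  rw [facetMap_apply_of_ne x (swap_apply_ne_right_iff.mpr hi), Equiv.swap_apply_self]

lemma facetMap_mem_IcubeD_iff (hlst : (lst : ℕ) = n - 1) (hε : ε ∈ Icc (-1 : ℝ) 1) {x : E n} :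
    facetMap k lst ε x ∈ IcubeD n (n - 1) ↔ x ∈ coordFacet k ε := by
  simp only [IcubeD, coordFacet, mem_Icube_iff, mem_ofPred_eq, val_lt_iff_ne_of_val_eq hlst,
    ← not_lt (b := n - 1), not_not, forall_eq, facetMap_apply_last, sub_eq_zero]
  refine and_congr_left fun hxk => ⟨fun h i => ?_, fun h i hi => ?_⟩
  · by_cases hi : i = k
    · rwa [hi, hxk]
    · rw [← facetMap_apply_swap x hi]
      exact h _ (swap_apply_ne_right_iff.mpr hi)
  · rw [facetMap_apply_of_ne x hi]
    exact h _

lemma image_facetMap_subset_IcubeD (hlst : (lst : ℕ) = n - 1) (hε : ε ∈ Icc (-1 : ℝ) 1)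
    {A : Set (E n)} (hA : A ⊆ coordFacet k ε) : facetMap k lst ε '' A ⊆ IcubeD n (n - 1) :=
  image_subset_iff.mpr fun _ hx => (facetMap_mem_IcubeD_iff hlst hε).mpr (hA hx)

lemma le_of_mem_minFace_facetMap {A : Set (E n)}
    (hA : facetMap k lst ε '' A ⊆ IcubeD n (n - 1)) {x : E n}
    (hx : facetMap k lst ε x ∈ minFace n (n - 1) (facetMap k lst ε '' A)) {q : Fin n}
    (hq : q ≠ k) {s c : ℝ} (hs : s = 1 ∨ s = -1) (hc : c = 1 ∨ c = -1)
    (h : ∀ z ∈ A, s * z q ≤ c) : s * x q ≤ c := by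
  rw [← facetMap_apply_swap x hq]
  refine minFace_coord_le hA hx hs hc ?_
  rintro _ ⟨z, hz, rfl⟩
  rw [facetMap_apply_swap z hq]
  exact h z hz

variable {S : Set (Set (E n))}

lemma mem_of_facetMap_mem (hS : IsFundSubset n S) (hlst : (lst : ℕ) = n - 1)
    (hε : ε = 1 ∨ ε = -1) (hne : (⋂₀ S ∩ coordFacet k ε).Nonempty) {x : E n}
    (hxS : facetMap k lst ε x ∈ ⋂₀ reindexFund S (Equiv.swap k lst) (n - 1))
    (hxf : facetMap k lst ε x ∈
      minFace n (n - 1) (facetMap k lst ε '' (⋂₀ S ∩ coordFacet k ε)))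
    {T : Set (E n)} (hT : T ∈ S) : x ∈ T := by
  have hεI : ε ∈ Icc (-1 : ℝ) 1 := by rcases hε with rfl | rfl <;> norm_num
  have hG : facetMap k lst ε '' (⋂₀ S ∩ coordFacet k ε) ⊆ IcubeD n (n - 1) :=
    image_facetMap_subset_IcubeD hlst hεI inter_subset_right
  have hxF : x ∈ coordFacet k ε := (facetMap_mem_IcubeD_iff hlst hεI).mp hxf.1
  obtain ⟨p, q, -, -, a, b, ha, hb, rfl⟩ := hS.1 hT
  refine ⟨hxF.1, ?_⟩
  rcases eq_or_ne k p with rfl | hp <;> rcases eq_or_ne k q with rfl | hq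
  · obtain ⟨x₀, hx₀S, hx₀F⟩ := hne
    have := (hx₀S _ hT).2
    rwa [hx₀F.2, ← hxF.2] at this
  · rw [hxF.2]
    refine le_of_mem_minFace_facetMap hG hxf hq.symm hb (by rcases ha with rfl | rfl <;>
      rcases hε with rfl | rfl <;> norm_num) fun z ⟨hzS, hzF⟩ => ?_
    rw [← hzF.2]
    exact (hzS _ hT).2
  · rw [hxF.2]
    have := le_of_mem_minFace_facetMap hG hxf hp.symm (s := -a) (c := -(b * ε))
      (by rcases ha with rfl | rfl <;> norm_num)
      (by rcases hb with rfl | rfl <;> rcases hε with rfl | rfl <;> norm_num)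
      fun z ⟨hzS, hzF⟩ => by
        have := (hzS _ hT).2
        rw [hzF.2] at this
        linarith
    linarith
  · have hlt {i : Fin n} (hi : i ≠ k) : ((Equiv.swap k lst i : Fin n) : ℕ) < n - 1 :=
      (val_lt_iff_ne_of_val_eq hlst).mpr (swap_apply_ne_right_iff.mpr hi)
    have := (hxS _ ⟨_, _, hlt hp.symm, hlt hq.symm, a, b, ha, hb,
      by rwa [Equiv.swap_apply_self, Equiv.swap_apply_self], rfl⟩).2
    rwa [facetMap_apply_swap x hp.symm, facetMap_apply_swap x hq.symm] at this

theorem sInter_inter_coordFacet_eq (hS : IsFundSubset n S) (hlst : (lst : ℕ) = n - 1)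
    (hε : ε = 1 ∨ ε = -1) (hne : (⋂₀ S ∩ coordFacet k ε).Nonempty) :
    ⋂₀ S ∩ coordFacet k ε =
      facetMap k lst ε ⁻¹' ⋂₀ reindexFund S (Equiv.swap k lst) (n - 1) ∩
        facetMap k lst ε ⁻¹' minFace n (n - 1) (facetMap k lst ε '' (⋂₀ S ∩ coordFacet k ε)) := by
  have hεI : ε ∈ Icc (-1 : ℝ) 1 := by rcases hε with rfl | rfl <;> norm_num
  have hG : facetMap k lst ε '' (⋂₀ S ∩ coordFacet k ε) ⊆ IcubeD n (n - 1) :=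
    image_facetMap_subset_IcubeD hlst hεI inter_subset_right
  ext x
  refine ⟨fun ⟨hxS, hxF⟩ => ⟨?_, subset_minFace hG (mem_image_of_mem _ ⟨hxS, hxF⟩)⟩,
    fun ⟨hxS, hxf⟩ => ⟨fun T hT => mem_of_facetMap_mem hS hlst hε hne hxS hxf hT,
      (facetMap_mem_IcubeD_iff hlst hεI).mp hxf.1⟩⟩
  rintro _ ⟨i, j, hi, hj, a, b, -, -, hT, rfl⟩
  refine ⟨(facetMap_mem_IcubeD_iff hlst hεI).mpr hxF, ?_⟩
  rw [facetMap_apply_of_ne x ((val_lt_iff_ne_of_val_eq hlst).mp hi),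
    facetMap_apply_of_ne x ((val_lt_iff_ne_of_val_eq hlst).mp hj)]
  exact (hxS _ hT).2

end Facet

/-- If `H ∈ K°_n` and `F` is a facet of `I^n` with `H ∩ F ≠ ∅`, then there are
`H_F ∈ K°_{n-1}(F)` and a face `f_F` of `F` with `H ∩ F = H_F ∩ f_F`. -/
theorem stmt6 (n : ℕ) (hn : 1 ≤ n) (H : Set (E n)) (hH : H ∈ Ko n)
    (F : Set (E n)) (hF : IsFaceD n n F (n - 1)) (hHF : (H ∩ F).Nonempty) :
    ∃ HF ∈ KoCube n (n - 1) F, ∃ fF : Set (E n),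
      (∃ e, FaceOfCubeDim n (n - 1) F fF e) ∧ H ∩ F = HF ∩ fF := by
  obtain ⟨S, hS, rfl⟩ := hH
  obtain ⟨k, ε, hε, rfl⟩ := exists_eq_coordFacet hn hF
  set lst : Fin n := ⟨n - 1, by omega⟩
  set L := facetMap k lst ε
  have hpre : L ⁻¹' IcubeD n (n - 1) = coordFacet k ε :=
    ext fun _ => facetMap_mem_IcubeD_iff rfl (by rcases hε with rfl | rfl <;> norm_num)
  have hLF : L '' coordFacet k ε = IcubeD n (n - 1) := by
    rw [← hpre, image_preimage_eq _ (confAffine_facetMap k lst ε).surjective]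
  set G := L '' (⋂₀ S ∩ coordFacet k ε)
  have hG : G ⊆ IcubeD n (n - 1) := hLF ▸ image_mono inter_subset_right
  obtain ⟨HF, hKo, hHFeq⟩ := exists_mem_KoCube_inter_eq (confAffine_facetMap k lst ε) hLF
    ⟨_, isFundSubsetD_reindexFund hS (Equiv.swap k lst) (n - 1), rfl⟩
    (hpre ▸ preimage_mono (minFace_subset_IcubeD G) : L ⁻¹' minFace n (n - 1) G ⊆ _)
  obtain ⟨e, he⟩ := isFaceD_minFace hG (hHF.image L)
  exact ⟨HF, hKo, _, ⟨e, L, confAffine_facetMap k lst ε, hLF, _, he, rfl⟩,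
    by rw [hHFeq, sInter_inter_coordFacet_eq (lst := lst) hS rfl hε hHF]⟩
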